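/- arXiv:1903.00950 — 8 statements merged into one kernel-verified Lean document; each statement's English description precedes it below -/
import Mathlib

section
/- Let X = ∏_{i=1}^n [0, u_i] ⊆ ℝ^n be an axis-aligned box and f : X → ℝ. Then f is weakly DR-submodular if and only if for all x ≤ y in X and every z ∈ ℝ^n with z ≥ 0, z_i = 0 for every coordinate i with y_i > x_i, and x + z ∈ X, y + z ∈ X, one has f(x + z) − f(x) ≥ f(y + z) − f(y). -/
/-! The group increment `z` is added one coordinate at a time, `z = ∑ᵢ zᵢ eᵢ`. Each single step
either adds nothing (`zᵢ = 0`) or moves along a coordinate where `x` and `y` agree, so weak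
DR-submodularity applies to it; the partial sums stay in `X` because `X` is order-connected, and
the inequalities telescope. -/

/-- A function `f` on a subset `X ⊆ ℝ^n` is weakly DR-submodular if for all `x ≤ y` in `X`,
every coordinate `i` with `x i = y i`, and every `k ≥ 0` keeping both points in `X`,
`f (x + k eᵢ) - f x ≥ f (y + k eᵢ) - f y`. -/
def WeaklyDRSubmodularOn {n : ℕ} (X : Set (Fin n → ℝ)) (f : (Fin n → ℝ) → ℝ) : Prop :=
  ∀ ⦃x y : Fin n → ℝ⦄, x ∈ X → y ∈ X → x ≤ y →
    ∀ i : Fin n, x i = y i → ∀ k : ℝ, 0 ≤ k →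
      x + Pi.single i k ∈ X → y + Pi.single i k ∈ X →
        f (x + Pi.single i k) - f x ≥ f (y + Pi.single i k) - f y

lemma Set.OrdConnected.add_mem_of_nonneg_of_le {α : Type*} [AddCommMonoid α] [PartialOrder α]
    [IsOrderedAddMonoid α] {X : Set α} (hX : X.OrdConnected) {x w z : α}
    (hx : x ∈ X) (hxz : x + z ∈ X) (hw : 0 ≤ w) (hwz : w ≤ z) : x + w ∈ X :=
  hX.out hx hxz ⟨le_add_of_nonneg_right hw, add_le_add_right hwz x⟩

namespace WeaklyDRSubmodularOn

variable {n : ℕ} {X : Set (Fin n → ℝ)} {f : (Fin n → ℝ) → ℝ}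

lemma sub_ge_sub_add_sum_single (hf : WeaklyDRSubmodularOn X f) (hX : X.OrdConnected)
    {x y : Fin n → ℝ} (hx : x ∈ X) (hy : y ∈ X) (hxy : x ≤ y)
    {c : Fin n → ℝ} (hc : 0 ≤ c) (hcxy : ∀ i, x i < y i → c i = 0) (s : Finset (Fin n))
    (hxs : x + ∑ i ∈ s, Pi.single i (c i) ∈ X) (hys : y + ∑ i ∈ s, Pi.single i (c i) ∈ X) :
    f (x + ∑ i ∈ s, Pi.single i (c i)) - f x ≥ f (y + ∑ i ∈ s, Pi.single i (c i)) - f y := by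
  induction s using Finset.induction_on with
  | empty => simp
  | @insert a s ha ih =>
    set w := ∑ i ∈ s, Pi.single i (c i)
    rw [Finset.sum_insert ha, add_comm (Pi.single a (c a)) w] at hxs hys ⊢
    have hw : 0 ≤ w := Finset.sum_nonneg fun i _ ↦ Pi.single_nonneg.2 (hc i)
    have hwle : w ≤ w + Pi.single a (c a) := le_add_of_nonneg_right (Pi.single_nonneg.2 (hc a))
    have hxw := hX.add_mem_of_nonneg_of_le hx hxs hw hwle
    have hyw := hX.add_mem_of_nonneg_of_le hy hys hw hwle
    have step : f (x + w + Pi.single a (c a)) - f (x + w) ≥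
        f (y + w + Pi.single a (c a)) - f (y + w) := by
      by_cases hca : c a = 0
      · simp [hca]
      have hxya : x a = y a := (hxy a).eq_of_not_lt (mt (hcxy a) hca)
      rw [← add_assoc] at hxs hys
      exact hf hxw hyw (add_le_add_left hxy w) a (by simp [hxya]) (c a) (hc a) hxs hys
    have := ih hxw hyw
    rw [← add_assoc, ← add_assoc]
    linarith

theorem iff_group (hX : X.OrdConnected) :
    WeaklyDRSubmodularOn X f ↔
      ∀ x y : Fin n → ℝ, x ∈ X → y ∈ X → x ≤ y →
        ∀ z : Fin n → ℝ, 0 ≤ z → (∀ i : Fin n, x i < y i → z i = 0) →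
          x + z ∈ X → y + z ∈ X → f (x + z) - f x ≥ f (y + z) - f y := by
  constructor
  · intro hf x y hx hy hxy z hz hzxy hxz hyz
    rw [← Finset.univ_sum_single z] at hxz hyz ⊢
    exact hf.sub_ge_sub_add_sum_single hX hx hy hxy hz hzxy _ hxz hyz
  · intro h x y hx hy hxy i hxyi k hk
    refine h x y hx hy hxy _ (Pi.single_nonneg.2 hk) fun j hj ↦ ?_
    have hji : j ≠ i := by rintro rfl; exact hj.ne hxyi
    exact Pi.single_eq_of_ne hji _

end WeaklyDRSubmodularOn

/-- Proposition 3: on a box `X = ∏ᵢ [0, uᵢ]`, weak DR-submodularity is equivalent to the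
"group" version where a whole nonnegative vector `z` supported on the coordinates where
`x` and `y` agree is added. -/
theorem weaklyDRSubmodular_iff_group {n : ℕ} (u : Fin n → ℝ) (f : (Fin n → ℝ) → ℝ) :
    WeaklyDRSubmodularOn (Set.Icc 0 u) f ↔
      ∀ x y : Fin n → ℝ, x ∈ Set.Icc 0 u → y ∈ Set.Icc 0 u → x ≤ y →
        ∀ z : Fin n → ℝ, 0 ≤ z → (∀ i : Fin n, x i < y i → z i = 0) →
          x + z ∈ Set.Icc 0 u → y + z ∈ Set.Icc 0 u →
            f (x + z) - f x ≥ f (y + z) - f y :=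
  WeaklyDRSubmodularOn.iff_group Set.ordConnected_Icc
end

section
/- Let z_max ∈ ℝ^n with z_max ≥ 0, let Z = {x ∈ ℝ^n : 0 ≤ x ≤ z_max}, and let f : Z → ℝ be monotone and DR-submodular. Then for every coordinate i and all reals 0 < l < m ≤ [z_max]_i, the cross-multiplied ratio inequality holds: (f(z_max) − f(z_max − m e_i)) · (f(l e_i) − f(0)) ≥ (f(z_max) − f(z_max − l e_i)) · (f(m e_i) − f(0)). (Equivalently, the coordinate-wise curvature ratio (f(z_max) − f(z_max − k e_i))/(f(k e_i) − f(0)) is non-decreasing in k wherever the denominator is positive.) -/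
/-- `f` is monotone on `X`: `f x ≤ f y` whenever `x ≤ y` in `X`. -/
def MonotoneOnSet {n : ℕ} (X : Set (Fin n → ℝ)) (f : (Fin n → ℝ) → ℝ) : Prop :=
  ∀ ⦃x⦄, x ∈ X → ∀ ⦃y⦄, y ∈ X → x ≤ y → f x ≤ f y

/-- `f` is DR-submodular on `X`. -/
def DRSubmodularOn {n : ℕ} (X : Set (Fin n → ℝ)) (f : (Fin n → ℝ) → ℝ) : Prop :=
  ∀ ⦃x y : Fin n → ℝ⦄, x ∈ X → y ∈ X → x ≤ y →
    ∀ i : Fin n, ∀ k : ℝ, 0 ≤ k →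
      x + Pi.single i k ∈ X → y + Pi.single i k ∈ X →
        f (x + Pi.single i k) - f x ≥ f (y + Pi.single i k) - f y

set_option maxHeartbeats 1000000 in
/-- For a monotone DR-submodular function on the box `Z = [0, z_max]`, the coordinate-wise
curvature ratio `(f(z_max) − f(z_max − k eᵢ)) / (f(k eᵢ) − f 0)` is non-decreasing in `k`,
stated in cross-multiplied form. -/
theorem curvature_ratio_monotone {n : ℕ} (zmax : Fin n → ℝ) (hz : 0 ≤ zmax)
    (f : (Fin n → ℝ) → ℝ)
    (hmono : MonotoneOnSet (Set.Icc 0 zmax) f)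
    (hDR : DRSubmodularOn (Set.Icc 0 zmax) f) :
    ∀ (i : Fin n) (l m : ℝ), 0 < l → l < m → m ≤ zmax i →
      (f zmax - f (zmax - Pi.single i m)) * (f (Pi.single i l) - f 0) ≥
        (f zmax - f (zmax - Pi.single i l)) * (f (Pi.single i m) - f 0) := by
  intro i l m hl hlm hmzi
  have hm : (0:ℝ) < m := hl.trans hlm
  -- memberships
  have hmem1 : ∀ t : ℝ, 0 ≤ t → t ≤ zmax i → Pi.single i t ∈ Set.Icc (0 : Fin n → ℝ) zmax := by
    intro t ht htz
    refine ⟨fun j => ?_, fun j => ?_⟩ <;>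
    · rcases eq_or_ne j i with h | h
      · subst h; simp [ht, htz]
      · simpa [Pi.single_apply, h] using hz j
  have hmem2 : ∀ t : ℝ, 0 ≤ t → t ≤ zmax i →
      zmax - Pi.single i t ∈ Set.Icc (0 : Fin n → ℝ) zmax := by
    intro t ht htz
    refine ⟨fun j => ?_, fun j => ?_⟩ <;>
    · rcases eq_or_ne j i with h | h
      · subst h; simp [ht, htz]; try linarith
      · simpa [Pi.single_apply, h] using hz j
  have hsle : ∀ a b : ℝ, a ≤ b → (Pi.single i a : Fin n → ℝ) ≤ Pi.single i b := by
    intro a b hab j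
    rcases eq_or_ne j i with h | h
    · subst h; simpa using hab
    · simp [Pi.single_apply, h]
  have hadd : ∀ a b : ℝ, Pi.single i a + Pi.single i b = (Pi.single i (a + b) : Fin n → ℝ) := by
    intro a b
    funext j
    rcases eq_or_ne j i with h | h
    · subst h; simp
    · simp [Pi.single_apply, h]
  have hsub : ∀ a b : ℝ, zmax - Pi.single i a + Pi.single i b = zmax - Pi.single i (a - b) := by
    intro a b
    funext j
    rcases eq_or_ne j i with h | h
    · subst h; simp; ring
    · simp [Pi.single_apply, h]
  -- the key abstract lemma
  have ratio_key : ∀ (M : ℝ) (φ : ℝ → ℝ), φ 0 = 0 →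
      (∀ x y : ℝ, 0 ≤ x → x ≤ y → y ≤ M → φ x ≤ φ y) →
      (∀ x y : ℝ, 0 ≤ x → x ≤ y → y ≤ M → φ x + φ y ≤ 2 * φ ((x + y) / 2)) →
      ∀ l m : ℝ, 0 ≤ l → l ≤ m → m ≤ M → 0 < m → l * φ m ≤ m * φ l := by
    clear hl hlm hmzi hm
    intro M φ hφ0 hmono hmid
    have dyadic : ∀ N : ℕ, ∀ j : ℕ, j ≤ 2 ^ N → ∀ t : ℝ, 0 ≤ t → t ≤ M →
        (j : ℝ) * φ t ≤ 2 ^ N * φ ((j : ℝ) * t / 2 ^ N) := by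
      intro N
      induction N with
      | zero =>
        intro j hj t ht htM
        interval_cases j
        · simp [hφ0]
        · simp
      | succ N ih =>
        intro j hj t ht htM
        have h2 : (2:ℕ) ^ (N+1) = 2 * 2 ^ N := by ring
        set b := j / 2 with hb
        set a := j - b with ha
        have hab : a + b = j := by omega
        have haN : a ≤ 2 ^ N := by omega
        have hbN : b ≤ 2 ^ N := by omega
        have hba : b ≤ a := by omega
        have hj' : (a:ℝ) + (b:ℝ) = (j:ℝ) := by exact_mod_cast congrArg (Nat.cast : ℕ → ℝ) hab
        have hpow : (0:ℝ) < 2 ^ N := by positivity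
        have hx0 : (0:ℝ) ≤ (b:ℝ) * t / 2 ^ N := by positivity
        have hxy : (b:ℝ) * t / 2 ^ N ≤ (a:ℝ) * t / 2 ^ N := by
          gcongr
        have haR : (a:ℝ) ≤ 2 ^ N := by exact_mod_cast haN
        have hyM : (a:ℝ) * t / 2 ^ N ≤ M := by
          have h1 : (a:ℝ) * t / 2 ^ N ≤ t := by
            rw [div_le_iff₀ hpow]
            nlinarith
          linarith
        have hmd := hmid _ _ hx0 hxy hyM
        have iha := ih a haN t ht htM
        have ihb := ih b hbN t ht htM
        have hmidpt : ((b:ℝ) * t / 2 ^ N + (a:ℝ) * t / 2 ^ N) / 2 = (j:ℝ) * t / 2 ^ (N+1) := by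
          rw [← hj', pow_succ]
          field_simp
          ring
        calc (j:ℝ) * φ t = (a:ℝ) * φ t + (b:ℝ) * φ t := by rw [← hj']; ring
          _ ≤ 2 ^ N * φ ((a:ℝ) * t / 2 ^ N) + 2 ^ N * φ ((b:ℝ) * t / 2 ^ N) := by linarith
          _ ≤ 2 ^ N * (2 * φ (((b:ℝ) * t / 2 ^ N + (a:ℝ) * t / 2 ^ N) / 2)) := by nlinarith
          _ = 2 ^ (N+1) * φ ((j:ℝ) * t / 2 ^ (N+1)) := by rw [hmidpt]; ring
    intro l m hl hlm hmM hm
    have hφm : 0 ≤ φ m := by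
      have := hmono 0 m le_rfl (hl.trans hlm) hmM
      rwa [hφ0] at this
    refine le_of_forall_pos_le_add ?_
    intro ε hε
    obtain ⟨N, hN⟩ : ∃ N : ℕ, m * φ m / ε < 2 ^ N := pow_unbounded_of_one_lt _ one_lt_two
    have h7' : m * φ m < ε * 2 ^ N := by
      rw [div_lt_iff₀ hε] at hN
      linarith
    set j := ⌊l * 2 ^ N / m⌋₊ with hjdef
    have hq0 : 0 ≤ l * 2 ^ N / m := by positivity
    have hjle : (j:ℝ) ≤ l * 2 ^ N / m := Nat.floor_le hq0
    have hjlt : l * 2 ^ N / m < (j:ℝ) + 1 := Nat.lt_floor_add_one _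
    have hpowpos : (0:ℝ) < 2 ^ N := by positivity
    have hjle2 : j ≤ 2 ^ N := by
      have h1 : l * 2 ^ N / m ≤ 2 ^ N := by
        rw [div_le_iff₀ hm]
        nlinarith
      have h2 : (j:ℝ) ≤ ((2 ^ N : ℕ) : ℝ) := by push_cast; linarith
      exact_mod_cast h2
    have hkey := dyadic N j hjle2 m (hl.trans hlm) hmM
    have harg : (j:ℝ) * m / 2 ^ N ≤ l := by
      rw [div_le_iff₀ hpowpos]
      have h3 : (j:ℝ) * m ≤ l * 2 ^ N := by
        rw [le_div_iff₀ hm] at hjle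
        linarith
      linarith
    have harg0 : 0 ≤ (j:ℝ) * m / 2 ^ N := by positivity
    have hmon2 : φ ((j:ℝ) * m / 2 ^ N) ≤ φ l := hmono _ _ harg0 harg (hlm.trans hmM)
    have h5 : (j:ℝ) * φ m ≤ 2 ^ N * φ l := le_trans hkey (by nlinarith)
    have h6 : l * 2 ^ N < ((j:ℝ) + 1) * m := by
      rw [div_lt_iff₀ hm] at hjlt
      linarith
    nlinarith [mul_le_mul_of_nonneg_right h6.le hφm, mul_le_mul_of_nonneg_left h5 hm.le]
  -- instance 1 : g t = f (t eᵢ) - f 0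
  have hg := ratio_key (zmax i) (fun t => f (Pi.single i t) - f 0)
    (by simp)
    (by
      intro x y hx hxy hyz
      have := hmono (hmem1 x hx (hxy.trans hyz)) (hmem1 y (hx.trans hxy) hyz) (hsle x y hxy)
      simpa using this)
    (by
      intro x y hx hxy hyz
      have hmid0 : x ≤ (x + y) / 2 := by linarith
      have hmidy : (x + y) / 2 ≤ y := by linarith
      have hk : (0:ℝ) ≤ (y - x) / 2 := by linarith
      have e1 : Pi.single i x + Pi.single i ((y - x) / 2)
          = (Pi.single i ((x + y) / 2) : Fin n → ℝ) := by rw [hadd]; ring_nf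
      have e2 : Pi.single i ((x + y) / 2) + Pi.single i ((y - x) / 2)
          = (Pi.single i y : Fin n → ℝ) := by rw [hadd]; ring_nf
      have := hDR (hmem1 x hx (hxy.trans hyz))
        (hmem1 ((x + y) / 2) (hx.trans hmid0) (hmidy.trans hyz))
        (hsle x ((x + y) / 2) hmid0) i ((y - x) / 2) hk
        (by rw [e1]; exact hmem1 _ (hx.trans hmid0) (hmidy.trans hyz))
        (by rw [e2]; exact hmem1 y (hx.trans hxy) hyz)
      rw [e1, e2] at this
      linarith)
    l m hl.le hlm.le hmzi hm
  -- instance 2 : ψ t = f (zmax - (m - t) eᵢ) - f (zmax - m eᵢ)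
  have hψ := ratio_key m (fun t => f (zmax - Pi.single i (m - t)) - f (zmax - Pi.single i m))
    (by simp)
    (by
      intro x y hx hxy hym
      have hle : zmax - Pi.single i (m - x) ≤ zmax - Pi.single i (m - y) := by
        intro j
        rcases eq_or_ne j i with h | h
        · subst h; simp; linarith
        · simp [Pi.single_apply, h]
      have := hmono (hmem2 (m - x) (by linarith) (by linarith))
        (hmem2 (m - y) (by linarith) (by linarith)) hle
      simpa using this)
    (by
      intro x y hx hxy hym
      have hmid0 : x ≤ (x + y) / 2 := by linarith
      have hmidy : (x + y) / 2 ≤ y := by linarith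
      have hk : (0:ℝ) ≤ (y - x) / 2 := by linarith
      have hle : zmax - Pi.single i (m - x) ≤ zmax - Pi.single i (m - (x + y) / 2) := by
        intro j
        rcases eq_or_ne j i with h | h
        · subst h; simp; linarith
        · simp [Pi.single_apply, h]
      have e1 : zmax - Pi.single i (m - x) + Pi.single i ((y - x) / 2)
          = zmax - Pi.single i (m - (x + y) / 2) := by rw [hsub]; ring_nf
      have e2 : zmax - Pi.single i (m - (x + y) / 2) + Pi.single i ((y - x) / 2)
          = zmax - Pi.single i (m - y) := by rw [hsub]; ring_nf
      have := hDR (hmem2 (m - x) (by linarith) (by linarith))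
        (hmem2 (m - (x + y) / 2) (by linarith) (by linarith))
        hle i ((y - x) / 2) hk
        (by rw [e1]; exact hmem2 _ (by linarith) (by linarith))
        (by rw [e2]; exact hmem2 _ (by linarith) (by linarith))
      rw [e1, e2] at this
      linarith)
    (m - l) m (by linarith) (by linarith) le_rfl hm
  -- unfold the two instances
  rw [show m - (m - l) = l by ring] at hψ
  rw [show m - m = (0:ℝ) by ring, Pi.single_zero, sub_zero] at hψ
  set A := f zmax - f (zmax - Pi.single i m) with hA
  set B := f zmax - f (zmax - Pi.single i l) with hB
  set C := f (Pi.single i l) - f 0 with hC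
  set D := f (Pi.single i m) - f 0 with hD
  have hψ' : m * B ≤ l * A := by
    have : (m - l) * A ≤ m * (f (zmax - Pi.single i l) - f (zmax - Pi.single i m)) := hψ
    have hAB : f (zmax - Pi.single i l) - f (zmax - Pi.single i m) = A - B := by
      rw [hA, hB]; ring
    rw [hAB] at this
    nlinarith
  have hg' : l * D ≤ m * C := hg
  have hA0 : 0 ≤ A := by
    have := hmono (hmem2 m hm.le hmzi) (Set.mem_Icc.mpr ⟨hz, le_rfl⟩)
      (by
        intro j
        rcases eq_or_ne j i with h | h
        · subst h; simp; linarith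
        · simp [Pi.single_apply, h])
    rw [hA]; linarith
  have hD0 : 0 ≤ D := by
    have := hmono (Set.mem_Icc.mpr ⟨le_rfl, hz⟩) (hmem1 m hm.le hmzi)
      (by
        intro j
        rcases eq_or_ne j i with h | h
        · subst h; simp; linarith
        · simp [Pi.single_apply, h])
    rw [hD]; linarith
  have key := mul_le_mul hψ' hg' (mul_nonneg hl.le hD0) (mul_nonneg hl.le hA0)
  nlinarith [mul_pos hl hm, key]
end

section
/- Let z_max ∈ ℝ^n with z_max ≥ 0, let Z = {x ∈ ℝ^n : 0 ≤ x ≤ z_max}, let f : Z → ℝ be monotone and DR-submodular, and let α ∈ ℝ. Suppose the coordinate-wise curvature bound holds: for every x ∈ Z, every coordinate i, and every k ≥ 0 with x + k e_i ∈ Z, f(x + k e_i) − f(x) ≥ (1 − α)(f(k e_i) − f(0)). Then for all x, y ∈ Z with x + y ∈ Z, f(x + y) − f(x) ≥ (1 − α)(f(y) − f(0)). -/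
/-- Proposition 5 (second part): if a monotone DR-submodular function on the box
`Z = [0, z_max]` satisfies the coordinate-wise curvature bound with parameter `α`, then the
vector version `f(x + y) − f(x) ≥ (1 − α)(f(y) − f(0))` holds for all `x, y ∈ Z` with
`x + y ∈ Z`. -/
theorem curvature_vector_bound {n : ℕ} (zmax : Fin n → ℝ) (hz : 0 ≤ zmax)
    (f : (Fin n → ℝ) → ℝ) (α : ℝ)
    (hmono : MonotoneOnSet (Set.Icc 0 zmax) f)
    (hDR : DRSubmodularOn (Set.Icc 0 zmax) f)
    (hcurv : ∀ x ∈ Set.Icc (0 : Fin n → ℝ) zmax, ∀ i : Fin n, ∀ k : ℝ, 0 ≤ k →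
      x + Pi.single i k ∈ Set.Icc (0 : Fin n → ℝ) zmax →
        f (x + Pi.single i k) - f x ≥ (1 - α) * (f (Pi.single i k) - f 0)) :
    ∀ x ∈ Set.Icc (0 : Fin n → ℝ) zmax, ∀ y ∈ Set.Icc (0 : Fin n → ℝ) zmax,
      x + y ∈ Set.Icc (0 : Fin n → ℝ) zmax →
        f (x + y) - f x ≥ (1 - α) * (f y - f 0) := by
  intro x hx y hy hxy
  set Z := Set.Icc (0 : Fin n → ℝ) zmax with hZ
  rcases le_or_gt (1 - α) 0 with hα | hα
  · -- 1 - α ≤ 0 : use monotonicity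
    have h1 : f x ≤ f (x + y) := hmono hx hxy (by
      intro i
      have := hy.1 i
      simp only [Pi.zero_apply] at this
      simp only [Pi.add_apply]
      linarith)
    have h2 : f 0 ≤ f y := hmono (Set.left_mem_Icc.2 hz) hy hy.1
    nlinarith
  · -- main case
    -- truncation
    set G : ℕ → (Fin n → ℝ) := fun m i => if (i : ℕ) < m then y i else 0 with hGdef
    have hG0 : G 0 = 0 := by funext i; simp [hGdef]
    have hGn : G n = y := by funext i; simp [hGdef, i.isLt]
    have hGley : ∀ m, G m ≤ y := by
      intro m i; simp only [hGdef]; split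
      · exact le_refl _
      · exact hy.1 i
    have hGnn : ∀ m, (0 : Fin n → ℝ) ≤ G m := by
      intro m i; simp only [hGdef]; split
      · exact hy.1 i
      · exact le_refl _
    have hGmem : ∀ m, G m ∈ Z := fun m => ⟨hGnn m, le_trans (hGley m) hy.2⟩
    have hxGley : ∀ m, x + G m ≤ x + y := by
      intro m i; simpa using hGley m i
    have hxGmem : ∀ m, x + G m ∈ Z := by
      intro m
      refine ⟨?_, le_trans (hxGley m) hxy.2⟩
      intro i; simp only [Pi.add_apply]
      have := hx.1 i; have := hGnn m i
      simp only [Pi.zero_apply] at *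
      linarith
    have hstep : ∀ m (h : m < n),
        G (m + 1) = G m + Pi.single (⟨m, h⟩ : Fin n) (y ⟨m, h⟩) := by
      intro m h; funext i
      rcases lt_trichotomy (i : ℕ) m with hi | hi | hi
      · have hne : i ≠ ⟨m, h⟩ := by
          intro hh; rw [hh] at hi; simp at hi
        simp [hGdef, hi, Nat.lt_succ_of_lt hi, Pi.single_eq_of_ne hne]
      · have hieq : i = ⟨m, h⟩ := Fin.ext hi
        subst hieq
        simp [hGdef, Nat.lt_irrefl]
      · have hne : i ≠ ⟨m, h⟩ := by
          intro hh; rw [hh] at hi; simp at hi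
        have h1 : ¬ (i : ℕ) < m + 1 := by omega
        have h2 : ¬ (i : ℕ) < m := by omega
        simp [hGdef, h1, h2, Pi.single_eq_of_ne hne]
    have hsingle_mem : ∀ (i : Fin n), Pi.single i (y i) ∈ Z := by
      intro i
      constructor
      · intro j
        rcases eq_or_ne j i with rfl | hne
        · simpa using hy.1 j
        · simp [Pi.single_eq_of_ne hne]
      · intro j
        rcases eq_or_ne j i with rfl | hne
        · simpa using hy.2 j
        · have := hz j; simpa [Pi.single_eq_of_ne hne] using this
    -- the summand
    set s : ℕ → ℝ := fun j =>
      if h : j < n then f (Pi.single (⟨j, h⟩ : Fin n) (y ⟨j, h⟩)) - f 0 else 0 with hsdef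
    set S : ℕ → ℝ := fun m => ∑ j ∈ Finset.range m, s j with hSdef
    have hA : ∀ m, m ≤ n → f (x + G m) - f x ≥ (1 - α) * S m := by
      intro m
      induction m with
      | zero => intro _; simp [hG0, hSdef]
      | succ m ih =>
        intro hm
        have hmn : m < n := hm
        have ihm := ih (le_of_lt hmn)
        have hk : (0 : ℝ) ≤ y ⟨m, hmn⟩ := hy.1 _
        have hc := hcurv (x + G m) (hxGmem m) ⟨m, hmn⟩ (y ⟨m, hmn⟩) hk
          (by rw [add_assoc, ← hstep m hmn]; exact hxGmem (m + 1))
        rw [add_assoc, ← hstep m hmn] at hc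
        have hSm : S (m + 1) = S m + s m := by
          simp [hSdef, Finset.sum_range_succ]
        have hsm : s m = f (Pi.single (⟨m, hmn⟩ : Fin n) (y ⟨m, hmn⟩)) - f 0 := by
          simp [hsdef, hmn]
        rw [hSm, hsm]
        nlinarith
    have hB : ∀ m, m ≤ n → f (G m) - f 0 ≤ S m := by
      intro m
      induction m with
      | zero => intro _; simp [hG0, hSdef]
      | succ m ih =>
        intro hm
        have hmn : m < n := hm
        have ihm := ih (le_of_lt hmn)
        have hk : (0 : ℝ) ≤ y ⟨m, hmn⟩ := hy.1 _
        have hd := hDR (Set.left_mem_Icc.2 hz) (hGmem m) (hGnn m) ⟨m, hmn⟩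
          (y ⟨m, hmn⟩) hk
          (by rw [zero_add]; exact hsingle_mem _)
          (by rw [← hstep m hmn]; exact hGmem (m + 1))
        rw [zero_add, ← hstep m hmn] at hd
        have hSm : S (m + 1) = S m + s m := by
          simp [hSdef, Finset.sum_range_succ]
        have hsm : s m = f (Pi.single (⟨m, hmn⟩ : Fin n) (y ⟨m, hmn⟩)) - f 0 := by
          simp [hsdef, hmn]
        rw [hSm, hsm]
        linarith
    have hAn := hA n le_rfl
    have hBn := hB n le_rfl
    rw [hGn] at hAn hBn
    nlinarith
end

section
/- (Proposition 1, curvature part.) With the budget-allocation social function γ(s) = ∑_{t ∈ T} (1 − ∏_{i=1}^N ∏_{r=1}^d (1 − p(i, r, t))^{[s_i]_r}) for p : [N] × [d] × T → [0, 1), suppose for every advertiser i and channel r there exists t ∈ T with p(i, r, t) > 0, and let s̄ = (s̄_1, …, s̄_N) ∈ ℝ^{Nd}_+ be an upper bound on strategies. Define α = 1 − min_{i ∈ [N], r ∈ [d]} [ ∑_{t ∈ T} ln(1 − p(i, r, t)) · ∏_{j=1}^N ∏_{r'=1}^d (1 − p(j, r', t))^{2 [s̄_j]_{r'}} ] / [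 ∑_{t ∈ T} ln(1 − p(i, r, t)) ]. Then α < 1, and for all x, y ∈ ℝ^{Nd}_+ with x ≤ 2s̄, y ≤ 2s̄, and x + y ≤ 2s̄, γ(x + y) − γ(x) ≥ (1 − α) γ(y). -/
/-- Proposition 1 (curvature part): the budget-allocation social function has curvature
`α < 1` over the box `[0, 2s̄]`, where `α` is given by the explicit formula involving the
activation probabilities, and the corresponding curvature inequality holds. -/
theorem budget_allocation_curvature {N d : ℕ} (hN : 0 < N) (hd : 0 < d)
    (T : Type) [Fintype T]
    (p : Fin N → Fin d → T → ℝ)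
    (hp0 : ∀ i r t, 0 ≤ p i r t) (hp1 : ∀ i r t, p i r t < 1)
    (hpos : ∀ (i : Fin N) (r : Fin d), ∃ t : T, 0 < p i r t)
    (sb : Fin N × Fin d → ℝ) (hsb : 0 ≤ sb)
    (γ : (Fin N × Fin d → ℝ) → ℝ)
    (hγ : ∀ s, γ s = ∑ t : T, (1 - ∏ i : Fin N, ∏ r : Fin d, (1 - p i r t) ^ s (i, r)))
    (α : ℝ)
    (hα : α = 1 - sInf {q : ℝ | ∃ (i : Fin N) (r : Fin d), q =
      (∑ t : T, Real.log (1 - p i r t) *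
          ∏ j : Fin N, ∏ r' : Fin d, (1 - p j r' t) ^ (2 * sb (j, r'))) /
      (∑ t : T, Real.log (1 - p i r t))}) :
    α < 1 ∧
      ∀ x y : Fin N × Fin d → ℝ, 0 ≤ x → 0 ≤ y →
        x ≤ 2 • sb → y ≤ 2 • sb → x + y ≤ 2 • sb →
          γ (x + y) - γ x ≥ (1 - α) * γ y := by
  -- basic positivity of 1 - p
  have h1p : ∀ i r t, (0:ℝ) < 1 - p i r t := fun i r t => by linarith [hp1 i r t]
  have hL : ∀ i r t, Real.log (1 - p i r t) ≤ 0 := fun i r t =>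
    Real.log_nonpos (by linarith [h1p i r t]) (by linarith [hp0 i r t])
  -- linear exponent
  set A : (Fin N × Fin d → ℝ) → T → ℝ :=
    fun s t => ∑ i : Fin N, ∑ r : Fin d, Real.log (1 - p i r t) * s (i, r) with hA
  have key : ∀ (t : T) (s : Fin N × Fin d → ℝ),
      (∏ i : Fin N, ∏ r : Fin d, (1 - p i r t) ^ s (i, r)) = Real.exp (A s t) := by
    intro t s
    rw [hA]
    rw [Real.exp_sum]
    refine Finset.prod_congr rfl fun i _ => ?_
    rw [Real.exp_sum]
    refine Finset.prod_congr rfl fun r _ => ?_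
    exact Real.rpow_def_of_pos (h1p i r t) _
  have hγ' : ∀ s, γ s = ∑ t : T, (1 - Real.exp (A s t)) := by
    intro s; rw [hγ]
    exact Finset.sum_congr rfl fun t _ => by rw [key t s]
  -- A is nonpositive on nonneg vectors, antitone
  have hAneg : ∀ (s : Fin N × Fin d → ℝ), 0 ≤ s → ∀ t, A s t ≤ 0 := by
    intro s hs t
    refine Finset.sum_nonpos fun i _ => Finset.sum_nonpos fun r _ => ?_
    exact mul_nonpos_of_nonpos_of_nonneg (hL i r t) (hs (i, r))
  have hAmono : ∀ (s s' : Fin N × Fin d → ℝ), s ≤ s' → ∀ t, A s' t ≤ A s t := by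
    intro s s' hss t
    refine Finset.sum_le_sum fun i _ => Finset.sum_le_sum fun r _ => ?_
    exact mul_le_mul_of_nonpos_left (hss (i, r)) (hL i r t)
  have hAadd : ∀ (u v : Fin N × Fin d → ℝ) (t : T), A (u + v) t = A u t + A v t := by
    intro u v t
    rw [hA]
    simp [mul_add, Finset.sum_add_distrib]
  -- 2 • sb is nonneg
  have h2sb : (0 : Fin N × Fin d → ℝ) ≤ 2 • sb := by
    intro u
    simpa using mul_nonneg (by norm_num : (0:ℝ) ≤ 2) (hsb u)
  set B : T → ℝ := fun t => Real.exp (A (2 • sb) t) with hB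
  have hB0 : ∀ t, 0 < B t := fun t => Real.exp_pos _
  have hB1 : ∀ t, B t ≤ 1 := fun t => Real.exp_le_one_iff.mpr (hAneg _ h2sb t)
  set c : Fin N → Fin d → ℝ := fun i r => ∑ t : T, Real.log (1 - p i r t) with hc
  have hcneg : ∀ i r, c i r < 0 := by
    intro i r
    obtain ⟨t0, ht0⟩ := hpos i r
    have : Real.log (1 - p i r t0) < 0 :=
      Real.log_neg (h1p i r t0) (by linarith)
    calc c i r < ∑ t : T, (0:ℝ) :=
          Finset.sum_lt_sum (fun t _ => hL i r t) ⟨t0, Finset.mem_univ t0, this⟩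
      _ = 0 := by simp
  set num : Fin N → Fin d → ℝ := fun i r => ∑ t : T, Real.log (1 - p i r t) * B t with hnum
  have hnumneg : ∀ i r, num i r < 0 := by
    intro i r
    obtain ⟨t0, ht0⟩ := hpos i r
    have hlt : Real.log (1 - p i r t0) * B t0 < 0 :=
      mul_neg_of_neg_of_pos (Real.log_neg (h1p i r t0) (by linarith)) (hB0 t0)
    calc num i r < ∑ t : T, (0:ℝ) :=
          Finset.sum_lt_sum
            (fun t _ => mul_nonpos_of_nonpos_of_nonneg (hL i r t) (hB0 t).le)
            ⟨t0, Finset.mem_univ t0, hlt⟩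
      _ = 0 := by simp
  set q : Fin N → Fin d → ℝ := fun i r => num i r / c i r with hq
  have hqpos : ∀ i r, 0 < q i r := by
    intro i r
    rw [hq]
    have := hnumneg i r; have := hcneg i r
    exact div_pos_of_neg_of_neg (hnumneg i r) (hcneg i r)
  -- the set in hα
  set Q : Set ℝ := {v : ℝ | ∃ (i : Fin N) (r : Fin d), v =
      (∑ t : T, Real.log (1 - p i r t) *
          ∏ j : Fin N, ∏ r' : Fin d, (1 - p j r' t) ^ (2 * sb (j, r'))) /
      (∑ t : T, Real.log (1 - p i r t))} with hQ
  have hprod2 : ∀ t : T,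
      (∏ j : Fin N, ∏ r' : Fin d, (1 - p j r' t) ^ (2 * sb (j, r'))) = B t := by
    intro t
    have h1 : (∏ j : Fin N, ∏ r' : Fin d, (1 - p j r' t) ^ (2 * sb (j, r')))
        = ∏ j : Fin N, ∏ r' : Fin d, (1 - p j r' t) ^ ((2 • sb) (j, r')) := by
      refine Finset.prod_congr rfl fun j _ => Finset.prod_congr rfl fun r' _ => ?_
      congr 1
      simp [Pi.smul_apply, smul_eq_mul]
    rw [h1, key t (2 • sb)]
  have hval : ∀ (i : Fin N) (r : Fin d),
      (∑ t : T, Real.log (1 - p i r t) *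
          ∏ j : Fin N, ∏ r' : Fin d, (1 - p j r' t) ^ (2 * sb (j, r'))) /
        (∑ t : T, Real.log (1 - p i r t)) = q i r := by
    intro i r
    have h1 : (∑ t : T, Real.log (1 - p i r t) *
        ∏ j : Fin N, ∏ r' : Fin d, (1 - p j r' t) ^ (2 * sb (j, r')))
        = num i r :=
      Finset.sum_congr rfl fun t _ => by rw [hprod2 t]
    rw [h1]
  have hQeq : Q = Set.range (fun u : Fin N × Fin d => q u.1 u.2) := by
    ext v
    constructor
    · rintro ⟨i, r, rfl⟩
      exact ⟨(i, r), (hval i r).symm⟩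
    · rintro ⟨u, rfl⟩
      exact ⟨u.1, u.2, (hval u.1 u.2).symm⟩
  have hQfin : Q.Finite := by rw [hQeq]; exact Set.finite_range _
  have hQne : Q.Nonempty := by
    rw [hQeq]
    exact ⟨q (⟨0, hN⟩ : Fin N) (⟨0, hd⟩ : Fin d), ⟨(⟨0, hN⟩, ⟨0, hd⟩), rfl⟩⟩
  have hInf_mem : sInf Q ∈ Q := Set.Nonempty.csInf_mem hQne hQfin
  have hInf_pos : 0 < sInf Q := by
    have hmem := hInf_mem
    rw [hQeq] at hmem ⊢
    obtain ⟨⟨i, r⟩, hv⟩ := hmem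
    have hv' : q i r = sInf (Set.range fun u : Fin N × Fin d => q u.1 u.2) := hv
    rw [← hv']
    exact hqpos i r
  have hInf_le : ∀ i r, sInf Q ≤ q i r := by
    intro i r
    refine csInf_le hQfin.bddBelow ?_
    rw [hQeq]
    exact ⟨(i, r), rfl⟩
  have h1α : 1 - α = sInf Q := by rw [hα]; ring
  constructor
  · rw [hα]; linarith
  intro x y hx hy hx2 hy2 hxy2
  rw [ge_iff_le]
  -- pointwise lower bound for the marginal gain
  have step1 : ∀ t : T, (-(A y t)) * B t ≤ Real.exp (A x t) - Real.exp (A (x + y) t) := by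
    intro t
    have hadd : A (x + y) t = A x t + A y t := hAadd x y t
    have hu : A y t ≤ 0 := hAneg y hy t
    have h1 : -(A y t) + 1 ≤ Real.exp (-(A y t)) := Real.add_one_le_exp _
    have hxpos : 0 < Real.exp (A x t) := Real.exp_pos _
    have hypos : 0 < Real.exp (A y t) := Real.exp_pos _
    have hexp_inv : Real.exp (-(A y t)) * Real.exp (A y t) = 1 := by
      rw [← Real.exp_add]; simp
    have hmono : B t ≤ Real.exp (A (x + y) t) :=
      Real.exp_le_exp.mpr (hAmono _ _ hxy2 t)
    have h2 : (-(A y t)) * Real.exp (A y t) ≤ 1 - Real.exp (A y t) := by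
      nlinarith
    have h3 : (-(A y t)) * Real.exp (A (x + y) t) ≤
        Real.exp (A x t) - Real.exp (A (x + y) t) := by
      rw [hadd, Real.exp_add]
      nlinarith
    calc (-(A y t)) * B t ≤ (-(A y t)) * Real.exp (A (x + y) t) :=
          mul_le_mul_of_nonneg_left hmono (by linarith)
      _ ≤ _ := h3
  have step2 : ∑ t : T, (-(A y t)) * B t ≤ γ (x + y) - γ x := by
    rw [hγ' (x + y), hγ' x, ← Finset.sum_sub_distrib]
    refine Finset.sum_le_sum fun t _ => ?_
    have := step1 t
    linarith
  -- rewrite the sum as a sum over coordinates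
  have step3 : ∑ t : T, (-(A y t)) * B t
      = ∑ i : Fin N, ∑ r : Fin d, y (i, r) * (-(num i r)) := by
    rw [hA, hnum]
    simp only [neg_mul, Finset.sum_mul, mul_neg, ← Finset.sum_neg_distrib, Finset.mul_sum]
    rw [Finset.sum_comm]
    refine Finset.sum_congr rfl fun i _ => ?_
    rw [Finset.sum_comm]
    exact Finset.sum_congr rfl fun r _ => Finset.sum_congr rfl fun t _ => by ring
  have step4 : ∀ i r, sInf Q * (y (i, r) * (-(c i r))) ≤ y (i, r) * (-(num i r)) := by
    intro i r
    have hnc : -(num i r) = q i r * (-(c i r)) := by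
      have hqc : q i r * c i r = num i r := div_mul_cancel₀ _ (hcneg i r).ne
      rw [← hqc]; ring
    rw [hnc]
    have h1 : sInf Q * (-(c i r)) ≤ q i r * (-(c i r)) :=
      mul_le_mul_of_nonneg_right (hInf_le i r) (by linarith [hcneg i r])
    calc sInf Q * (y (i, r) * (-(c i r))) = y (i, r) * (sInf Q * (-(c i r))) := by ring
      _ ≤ y (i, r) * (q i r * (-(c i r))) :=
          mul_le_mul_of_nonneg_left h1 (hy (i, r))
  -- upper bound for γ y
  have step5 : γ y ≤ ∑ i : Fin N, ∑ r : Fin d, y (i, r) * (-(c i r)) := by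
    have h1 : γ y ≤ ∑ t : T, (-(A y t)) := by
      rw [hγ' y]
      refine Finset.sum_le_sum fun t _ => ?_
      have := Real.add_one_le_exp (A y t)
      linarith
    have h2 : ∑ t : T, (-(A y t)) = ∑ i : Fin N, ∑ r : Fin d, y (i, r) * (-(c i r)) := by
      rw [hA, hc]
      simp only [mul_neg, ← Finset.sum_neg_distrib, Finset.mul_sum]
      rw [Finset.sum_comm]
      refine Finset.sum_congr rfl fun i _ => ?_
      rw [Finset.sum_comm]
      exact Finset.sum_congr rfl fun r _ => Finset.sum_congr rfl fun t _ => by ring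
    linarith
  -- combine
  have main : sInf Q * γ y ≤ γ (x + y) - γ x := by
    have hsum : sInf Q * (∑ i : Fin N, ∑ r : Fin d, y (i, r) * (-(c i r)))
        ≤ ∑ i : Fin N, ∑ r : Fin d, y (i, r) * (-(num i r)) := by
      rw [Finset.mul_sum]
      refine Finset.sum_le_sum fun i _ => ?_
      rw [Finset.mul_sum]
      exact Finset.sum_le_sum fun r _ => step4 i r
    have h6 : sInf Q * γ y ≤ sInf Q * (∑ i : Fin N, ∑ r : Fin d, y (i, r) * (-(c i r))) :=
      mul_le_mul_of_nonneg_left step5 hInf_pos.le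
    calc sInf Q * γ y ≤ ∑ i : Fin N, ∑ r : Fin d, y (i, r) * (-(num i r)) := by linarith
      _ = ∑ t : T, (-(A y t)) * B t := step3.symm
      _ ≤ γ (x + y) - γ x := step2
  rw [h1α]
  exact main
end

section
/- (Proposition 2, curvature part.) Let γ(x) = ∑_{r=1}^d w_r · (1 − ∏_{i=1}^N (1 − p_i^r)^{[x_i]_r}) be the sensor-coverage social function with w_r ≥ 0 and p_i^r ∈ [0, 1), and let x̄ = (x̄_1, …, x̄_N) ∈ ℝ^{Nd}_+ be an upper bound on strategies. Define α = max_{r ∈ [d]} ( 1 − ∏_{i=1}^N (1 − p_i^r)^{2 [x̄_i]_r} ). Then for all x, y ∈ ℝ^{Nd}_+ with x ≤ 2x̄, y ≤ 2x̄, and x + y ≤ 2x̄, γ(x + y) − γ(x) ≥ (1 − α) γ(y). -/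
/-- Proposition 2 (curvature part): the sensor-coverage social function has curvature at most
`α = max_r (1 − ∏ᵢ (1 − pᵢʳ)^{2[x̄ᵢ]ᵣ}) = max_r P(r, 2x̄)` over the box `[0, 2x̄]`, i.e. the
curvature inequality `γ(x + y) − γ(x) ≥ (1 − α) γ(y)` holds there. -/
theorem sensor_coverage_curvature {N d : ℕ} (hd : 0 < d)
    (w : Fin d → ℝ) (hw : ∀ r, 0 ≤ w r)
    (p : Fin N → Fin d → ℝ)
    (hp0 : ∀ i r, 0 ≤ p i r) (hp1 : ∀ i r, p i r < 1)
    (xb : Fin N × Fin d → ℝ) (hxb : 0 ≤ xb)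
    (γ : (Fin N × Fin d → ℝ) → ℝ)
    (hγ : ∀ x, γ x = ∑ r : Fin d, w r * (1 - ∏ i : Fin N, (1 - p i r) ^ x (i, r)))
    (α : ℝ)
    (hα : α = sSup {q : ℝ | ∃ r : Fin d,
      q = 1 - ∏ i : Fin N, (1 - p i r) ^ (2 * xb (i, r))}) :
    ∀ x y : Fin N × Fin d → ℝ, 0 ≤ x → 0 ≤ y →
      x ≤ 2 • xb → y ≤ 2 • xb → x + y ≤ 2 • xb →
        γ (x + y) - γ x ≥ (1 - α) * γ y := by
  intro x y hx hy hx2 hy2 hxy2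
  have hbpos : ∀ i r, (0:ℝ) < 1 - p i r := fun i r => by linarith [hp1 i r]
  have hble : ∀ i r, (1:ℝ) - p i r ≤ 1 := fun i r => by linarith [hp0 i r]
  set P : Fin d → (Fin N × Fin d → ℝ) → ℝ :=
    fun r z => ∏ i : Fin N, (1 - p i r) ^ z (i, r) with hP
  -- basic bounds on P
  have hPpos : ∀ r z, 0 < P r z := fun r z =>
    Finset.prod_pos fun i _ => Real.rpow_pos_of_pos (hbpos i r) _
  have hPle1 : ∀ r (z : Fin N × Fin d → ℝ), 0 ≤ z → P r z ≤ 1 := by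
    intro r z hz
    apply Finset.prod_le_one
    · intro i _; exact (Real.rpow_pos_of_pos (hbpos i r) _).le
    · intro i _; exact Real.rpow_le_one (hbpos i r).le (hble i r) (hz (i, r))
  -- α ≥ 1 - P r (2 • xb) for each r
  have hset : {q : ℝ | ∃ r : Fin d,
      q = 1 - ∏ i : Fin N, (1 - p i r) ^ (2 * xb (i, r))} =
      Set.range (fun r : Fin d => 1 - ∏ i : Fin N, (1 - p i r) ^ (2 * xb (i, r))) := by
    ext q; simp [eq_comm]
  have halpha : ∀ r : Fin d, 1 - ∏ i : Fin N, (1 - p i r) ^ (2 * xb (i, r)) ≤ α := by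
    intro r
    rw [hα, hset]
    exact le_csSup (Set.finite_range _).bddAbove ⟨r, rfl⟩
  -- P r x ≥ 1 - α whenever x ≤ 2 • xb
  have hkey : ∀ (z : Fin N × Fin d → ℝ) r, z ≤ 2 • xb → 1 - α ≤ P r z := by
    intro z r hz
    have h1 : ∏ i : Fin N, (1 - p i r) ^ (2 * xb (i, r)) ≤ P r z := by
      apply Finset.prod_le_prod
      · intro i _; exact (Real.rpow_pos_of_pos (hbpos i r) _).le
      · intro i _
        apply Real.rpow_le_rpow_of_exponent_ge (hbpos i r) (hble i r)
        have := hz (i, r)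
        simpa [smul_eq_mul] using this
    linarith [halpha r]
  -- multiplicativity: P r (x + y) = P r x * P r y
  have hmul : ∀ r, P r (x + y) = P r x * P r y := by
    intro r
    simp only [hP, ← Finset.prod_mul_distrib]
    apply Finset.prod_congr rfl
    intro i _
    exact Real.rpow_add (hbpos i r) _ _
  -- now compare sums termwise
  rw [ge_iff_le, hγ, hγ, hγ, ← Finset.sum_sub_distrib, Finset.mul_sum]
  apply Finset.sum_le_sum
  intro r _
  have h1 : w r * (1 - P r (x + y)) - w r * (1 - P r x)
      = w r * (P r x * (1 - P r y)) := by rw [hmul r]; ring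
  rw [h1]
  have hy1 : 0 ≤ 1 - P r y := by linarith [hPle1 r y hy]
  have := mul_le_mul_of_nonneg_right (hkey x r hx2) hy1
  calc (1 - α) * (w r * (1 - P r y)) = w r * ((1 - α) * (1 - P r y)) := by ring
    _ ≤ w r * (P r x * (1 - P r y)) := mul_le_mul_of_nonneg_left this (hw r)
end

section
/- (Proposition B.1.) Let X = {x ∈ ℝ^n : 0 ≤ x ≤ u} be an axis-aligned box containing 0 and let f : X → ℝ. Then f is weakly DR-submodular if and only if f has submodularity ratio 1, i.e., for all x, y ∈ X with x + y ∈ X, ∑_{i=1}^n [f(x + y_i e_i) − f(x)] ≥ f(x + y) − f(x). -/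
/-!
Both conditions say that moving along one coordinate has diminishing returns, and they are
compared by walking between two points one coordinate at a time. Weak DR-submodularity bounds
each step of the walk from `x` to `x + y` by the corresponding single-coordinate gain at `x`,
and the gains telescope to `f (x + y) - f x`. Conversely, ratio one applied to a `y` supported
on two coordinates `p ≠ q` is the exchange inequality for those coordinates, and chaining it
along the walk from `x` to `y` (the coordinate `i` of the DR inequality stays fixed) shows that
the gain of a step along `eᵢ` does not increase.
-/

open Finset

theorem Finset.piecewise_insert_eq_add_single {ι G : Type*} [DecidableEq ι] [AddGroup G]
    {s : Finset ι} {j : ι} (hj : j ∉ s) (y x : ι → G) :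
    (insert j s).piecewise y x = s.piecewise y x + Pi.single j (-x j + y j) := by
  ext m
  obtain rfl | hm := eq_or_ne m j
  · simp [piecewise_eq_of_notMem _ _ _ hj]
  · simp [hm]

theorem WeaklyDRSubmodularOn.sub_le_sum {n : ℕ} {X : Set (Fin n → ℝ)} {f : (Fin n → ℝ) → ℝ}
    (hf : WeaklyDRSubmodularOn X f) (hX : X.OrdConnected) {x y : Fin n → ℝ} (hx : x ∈ X)
    (hy : 0 ≤ y) (hxy : x + y ∈ X) :
    f (x + y) - f x ≤ ∑ i, (f (x + Pi.single i (y i)) - f x) := by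
  classical
  have between (s : Finset (Fin n)) : s.piecewise (x + y) x ∈ Set.Icc x (x + y) :=
    s.piecewise_mem_Icc' (le_add_of_nonneg_right hy)
  have mem (s : Finset (Fin n)) : s.piecewise (x + y) x ∈ X := hX.out hx hxy (between s)
  have step {j : Fin n} {s : Finset (Fin n)} (hj : j ∉ s) :
      (insert j s).piecewise (x + y) x = s.piecewise (x + y) x + Pi.single j (y j) := by
    simpa using piecewise_insert_eq_add_single hj (x + y) x
  suffices ∀ s : Finset (Fin n),
      f (s.piecewise (x + y) x) - f x ≤ ∑ i ∈ s, (f (x + Pi.single i (y i)) - f x) by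
    simpa using this univ
  intro s
  induction s using Finset.induction_on with
  | empty => simp
  | insert j s hj ih =>
    have hxj : x + Pi.single j (y j) ∈ X := by
      simpa using step (notMem_empty j) ▸ mem (insert j ∅)
    have hdr := hf hx (mem s) (between s).1 j (piecewise_eq_of_notMem _ _ _ hj).symm (y j) (hy j)
      hxj (step hj ▸ mem (insert j s))
    rw [sum_insert hj, step hj]
    linarith

theorem exchange_of_submodularityRatio_one {ι : Type*} [Fintype ι] [DecidableEq ι] {u : ι → ℝ}
    {f : (ι → ℝ) → ℝ}
    (H : ∀ x ∈ Set.Icc (0 : ι → ℝ) u, ∀ y ∈ Set.Icc (0 : ι → ℝ) u,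
      x + y ∈ Set.Icc (0 : ι → ℝ) u → ∑ i, (f (x + Pi.single i (y i)) - f x) ≥ f (x + y) - f x)
    {z : ι → ℝ} (hz : z ∈ Set.Icc 0 u) {p q : ι} (hpq : p ≠ q) {a b : ℝ} (ha : 0 ≤ a)
    (hb : 0 ≤ b) (h : z + Pi.single p a + Pi.single q b ∈ Set.Icc 0 u) :
    f (z + Pi.single p a + Pi.single q b) - f (z + Pi.single q b) ≤
      f (z + Pi.single p a) - f z := by
  set w : ι → ℝ := Pi.single p a + Pi.single q b with hw
  rw [add_assoc] at h ⊢
  have hw0 : 0 ≤ w := add_nonneg (Pi.single_nonneg.2 ha) (Pi.single_nonneg.2 hb)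
  have hsum := H z hz w ⟨hw0, (le_add_of_nonneg_left hz.1).trans h.2⟩ h
  rw [Fintype.sum_eq_add p q hpq fun m hm => by simp [hw, hm.1, hm.2]] at hsum
  simp only [hw, Pi.add_apply, Pi.single_eq_same, Pi.single_eq_of_ne hpq,
    Pi.single_eq_of_ne hpq.symm, add_zero, zero_add] at hsum
  linarith

theorem weaklyDRSubmodularOn_of_exchange {n : ℕ} {X : Set (Fin n → ℝ)} {f : (Fin n → ℝ) → ℝ}
    (hX : X.OrdConnected)
    (H : ∀ z ∈ X, ∀ p q : Fin n, p ≠ q → ∀ a b : ℝ, 0 ≤ a → 0 ≤ b →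
      z + Pi.single p a + Pi.single q b ∈ X →
        f (z + Pi.single p a + Pi.single q b) - f (z + Pi.single q b) ≤
          f (z + Pi.single p a) - f z) :
    WeaklyDRSubmodularOn X f := by
  classical
  intro x y hx hy hxy i hi k hk _ hyk
  have between (s : Finset (Fin n)) : s.piecewise y x ∈ Set.Icc x y := s.piecewise_mem_Icc' hxy
  suffices ∀ s : Finset (Fin n),
      f (s.piecewise y x + Pi.single i k) - f (s.piecewise y x) ≤ f (x + Pi.single i k) - f x by
    simpa using this univ
  intro s
  induction s using Finset.induction_on with
  | empty => simp
  | insert j s hj ih =>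
    rw [piecewise_insert_eq_add_single hj]
    obtain rfl | hji := eq_or_ne j i
    · simpa [hi] using ih
    set z := s.piecewise y x
    have hz : x ≤ z := (between s).1
    have hzj : z + Pi.single j (-x j + y j) ≤ y := by
      rw [← piecewise_insert_eq_add_single hj]
      exact (between _).2
    have hjump : 0 ≤ -x j + y j := by linarith [hxy j]
    have hmem : z + Pi.single i k + Pi.single j (-x j + y j) ∈ X := by
      refine hX.out hx hyk ⟨?_, ?_⟩
      · exact le_add_of_le_of_nonneg (le_add_of_le_of_nonneg hz (Pi.single_nonneg.2 hk))
          (Pi.single_nonneg.2 hjump)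
      · rw [add_right_comm]
        exact add_le_add_left hzj _
    have hexchange := H z (hX.out hx hy (between s)) i j hji.symm k _ hk hjump hmem
    rw [add_right_comm] at hexchange
    exact hexchange.trans ih

theorem weaklyDRSubmodular_iff_submodularityRatio_one_general {n : ℕ}
    (u : Fin n → ℝ) (f : (Fin n → ℝ) → ℝ) :
    WeaklyDRSubmodularOn (Set.Icc 0 u) f ↔
      ∀ x ∈ Set.Icc (0 : Fin n → ℝ) u, ∀ y ∈ Set.Icc (0 : Fin n → ℝ) u,
        x + y ∈ Set.Icc (0 : Fin n → ℝ) u →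
          ∑ i : Fin n, (f (x + Pi.single i (y i)) - f x) ≥ f (x + y) - f x :=
  ⟨fun hf _ hx _ hy hxy => hf.sub_le_sum Set.ordConnected_Icc hx hy.1 hxy,
    fun H => weaklyDRSubmodularOn_of_exchange Set.ordConnected_Icc
      fun _ hz _ _ hpq _ _ ha hb h => exchange_of_submodularityRatio_one H hz hpq ha hb h⟩

/-- Proposition B.1: on a box `X = [0, u]` containing `0`, `f` is weakly DR-submodular if and
only if it has submodularity ratio `1`, i.e. for all `x, y ∈ X` with `x + y ∈ X`,
`∑ᵢ (f(x + yᵢ eᵢ) − f(x)) ≥ f(x + y) − f(x)`. -/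
theorem weaklyDRSubmodular_iff_submodularityRatio_one {n : ℕ}
    (u : Fin n → ℝ) (hu : (0 : Fin n → ℝ) ≤ u) (f : (Fin n → ℝ) → ℝ) :
    WeaklyDRSubmodularOn (Set.Icc 0 u) f ↔
      ∀ x ∈ Set.Icc (0 : Fin n → ℝ) u, ∀ y ∈ Set.Icc (0 : Fin n → ℝ) u,
        x + y ∈ Set.Icc (0 : Fin n → ℝ) u →
          ∑ i : Fin n, (f (x + Pi.single i (y i)) - f x) ≥ f (x + y) - f x :=
  weaklyDRSubmodular_iff_submodularityRatio_one_general u f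
end

section
/- (Proposition B.2.) Let X = {x ∈ ℝ^n : 0 ≤ x ≤ u} be a bounded axis-aligned box, let f : X → ℝ_+ be monotone, nonnegative, and weakly DR-submodular, and let ρ(x) = aᵀx + b with a ∈ ℝ^n, a ≥ 0, and b > 0. Define g(x) = f(x) · ρ(x) and η = min_{i ∈ [n]} b / (b + ∑_{j ≠ i} a_j u_j). Then η > 0 and for all x, y ∈ X with x + y ∈ X, ∑_{i=1}^n [g(x + y_i e_i) − g(x)] ≥ η · (g(x + y) − g(x)); that is, g has submodularity ratio at least η. -/
/-- Proposition B.2: if `f` is monotone, nonnegative and weakly DR-submodular on the bounded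
box `X = [0, u]`, and `ρ(x) = aᵀx + b` is a nonnegative affine function with `b > 0`, then
the product `g = f · ρ` has submodularity ratio at least
`η = minᵢ b / (b + ∑_{j ≠ i} aⱼ uⱼ) > 0`. -/
theorem product_affine_submodularity_ratio {n : ℕ} (hn : 0 < n)
    (u : Fin n → ℝ) (hu : (0 : Fin n → ℝ) ≤ u)
    (f : (Fin n → ℝ) → ℝ)
    (hmono : MonotoneOnSet (Set.Icc 0 u) f)
    (hnn : ∀ x ∈ Set.Icc (0 : Fin n → ℝ) u, 0 ≤ f x)
    (hweak : WeaklyDRSubmodularOn (Set.Icc 0 u) f)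
    (a : Fin n → ℝ) (ha : (0 : Fin n → ℝ) ≤ a) (b : ℝ) (hb : 0 < b)
    (η : ℝ)
    (hη : η = sInf {q : ℝ | ∃ i : Fin n,
      q = b / (b + ∑ j ∈ Finset.univ.erase i, a j * u j)}) :
    0 < η ∧
      ∀ x ∈ Set.Icc (0 : Fin n → ℝ) u, ∀ y ∈ Set.Icc (0 : Fin n → ℝ) u,
        x + y ∈ Set.Icc (0 : Fin n → ℝ) u →
          ∑ i : Fin n,
              (f (x + Pi.single i (y i)) * ((∑ j : Fin n, a j * ((x + Pi.single i (y i) : Fin n → ℝ)) j) + b)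
                - f x * ((∑ j : Fin n, a j * x j) + b)) ≥
            η * (f (x + y) * ((∑ j : Fin n, a j * (x + y) j) + b)
                - f x * ((∑ j : Fin n, a j * x j) + b)) := by
  classical
  have ha' : ∀ i, 0 ≤ a i := fun i => ha i
  have hu' : ∀ i, 0 ≤ u i := fun i => hu i
  set S : Fin n → ℝ := fun i => ∑ j ∈ Finset.univ.erase i, a j * u j with hSdef
  have hS : ∀ i, 0 ≤ S i := fun i =>
    Finset.sum_nonneg fun j _ => mul_nonneg (ha' j) (hu' j)
  have hbS : ∀ i, 0 < b + S i := fun i => by linarith [hS i]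
  set T : Set ℝ := {q : ℝ | ∃ i : Fin n, q = b / (b + S i)} with hTdef
  have hTr : T = Set.range (fun i : Fin n => b / (b + S i)) := by
    ext q; simp [hTdef, eq_comm]
  have hTfin : T.Finite := by rw [hTr]; exact Set.finite_range _
  have i0 : Fin n := ⟨0, hn⟩
  have hTne : T.Nonempty := ⟨b / (b + S i0), ⟨i0, rfl⟩⟩
  have hmemT : η ∈ T := by rw [hη]; exact hTne.csInf_mem hTfin
  obtain ⟨i1, hi1⟩ := hmemT
  have hηpos : 0 < η := hi1 ▸ div_pos hb (hbS i1)
  have hηle : ∀ i, η ≤ b / (b + S i) := fun i => by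
    rw [hη]; exact csInf_le hTfin.bddBelow ⟨i, rfl⟩
  have hη1 : η ≤ 1 := by
    refine (hηle i0).trans ?_
    rw [div_le_one (hbS i0)]; linarith [hS i0]
  refine ⟨hηpos, ?_⟩
  intro x hx y hy hxy
  have hx0 : ∀ j, 0 ≤ x j := fun j => hx.1 j
  have hxu : ∀ j, x j ≤ u j := fun j => hx.2 j
  have hy0 : ∀ j, 0 ≤ y j := fun j => hy.1 j
  have hxyu : ∀ j, x j + y j ≤ u j := fun j => hxy.2 j
  -- membership of the single-coordinate points
  have hxsi : ∀ i : Fin n, x + Pi.single i (y i) ∈ Set.Icc (0 : Fin n → ℝ) u := by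
    intro i
    constructor
    · intro j
      simp only [Pi.add_apply, Pi.single_apply, Pi.zero_apply]
      split <;> [linarith [hx0 j, hy0 i]; linarith [hx0 j]]
    · intro j
      simp only [Pi.add_apply, Pi.single_apply]
      rcases eq_or_ne j i with h | h
      · subst h; simp only [if_pos rfl]; exact hxyu j
      · simp only [if_neg h]; linarith [hxyu j, hy0 j]
  have hxlesi : ∀ i : Fin n, x ≤ x + Pi.single i (y i) := by
    intro i j
    simp only [Pi.add_apply, Pi.single_apply]
    split <;> [linarith [hy0 i]; linarith]
  set Δ : Fin n → ℝ := fun i => f (x + Pi.single i (y i)) - f x with hΔdef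
  have hΔ0 : ∀ i, 0 ≤ Δ i := fun i =>
    sub_nonneg.mpr (hmono hx (hxsi i) (hxlesi i))
  -- the chain z
  set z : ℕ → (Fin n → ℝ) := fun k j => x j + if (j : ℕ) < k then y j else 0 with hzdef
  have hz0 : z 0 = x := by funext j; simp [hzdef]
  have hzn : z n = x + y := by funext j; simp [hzdef, j.isLt]
  have hzx : ∀ k, x ≤ z k := by
    intro k j
    simp only [hzdef]
    split <;> [linarith [hy0 j]; linarith]
  have hzxy : ∀ k, z k ≤ x + y := by
    intro k j
    simp only [hzdef, Pi.add_apply]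
    split <;> [linarith; linarith [hy0 j]]
  have hzmem : ∀ k, z k ∈ Set.Icc (0 : Fin n → ℝ) u := by
    intro k
    constructor
    · intro j; exact le_trans (hx0 j) (hzx k j)
    · intro j; exact le_trans (hzxy k j) (hxyu j)
  have hzstep : ∀ (k : ℕ) (hk : k < n),
      z (k + 1) = z k + Pi.single (⟨k, hk⟩ : Fin n) (y ⟨k, hk⟩) := by
    intro k hk
    funext j
    simp only [hzdef, Pi.add_apply, Pi.single_apply]
    rcases eq_or_ne j ⟨k, hk⟩ with h | h
    · subst h
      simp [Nat.lt_irrefl, Nat.lt_succ_self]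
    · have hjk : (j : ℕ) ≠ k := fun hc => h (Fin.ext hc)
      have hiff : ((j : ℕ) < k + 1) ↔ ((j : ℕ) < k) := by omega
      simp [h, hiff]
  -- submodularity ratio 1 for f along the chain
  have key : ∀ k : ℕ, k ≤ n → f (z k) - f x ≤
      ∑ m ∈ Finset.range k, (if h : m < n then Δ ⟨m, h⟩ else 0) := by
    intro k
    induction k with
    | zero => intro _; simp [hz0]
    | succ k ih =>
      intro hk1
      have hk : k < n := hk1
      have ihk := ih (le_of_lt hk)
      set i : Fin n := ⟨k, hk⟩ with hidef
      have hxi : x i = z k i := by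
        simp [hzdef, hidef]
      have hmem1 : z k + Pi.single i (y i) ∈ Set.Icc (0 : Fin n → ℝ) u := by
        rw [← hzstep k hk]; exact hzmem (k + 1)
      have hdr := hweak hx (hzmem k) (hzx k) i hxi (y i) (hy0 i) (hxsi i) hmem1
      rw [← hzstep k hk] at hdr
      rw [Finset.sum_range_succ, dif_pos hk]
      have : f (z (k + 1)) - f (z k) ≤ Δ i := by
        simp only [hΔdef]; linarith [hdr]
      linarith
  have Qn : f (x + y) - f x ≤ ∑ i : Fin n, Δ i := by
    have h1 := key n le_rfl
    rw [hzn] at h1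
    have h2 : ∑ i : Fin n, Δ i =
        ∑ m ∈ Finset.range n, (if h : m < n then Δ ⟨m, h⟩ else 0) := by
      rw [← Fin.sum_univ_eq_sum_range (fun m => if h : m < n then Δ ⟨m, h⟩ else 0) n]
      exact Finset.sum_congr rfl fun i _ => by simp [i.isLt]
    rw [h2]; exact h1
  -- notation for the affine pieces
  set A : ℝ := ∑ j : Fin n, a j * x j with hAdef
  set R : ℝ := ∑ j : Fin n, a j * (x + y) j with hRdef
  have hPv : ∀ i : Fin n,
      (∑ j : Fin n, a j * ((x + Pi.single i (y i) : Fin n → ℝ)) j) = A + a i * y i := by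
    intro i
    simp only [Pi.add_apply, Pi.single_apply, mul_add, Finset.sum_add_distrib, hAdef]
    congr 1
    simp [mul_ite]
  have hRA : R = A + ∑ i : Fin n, a i * y i := by
    simp only [hRdef, hAdef, Pi.add_apply, mul_add, Finset.sum_add_distrib]
  have hDnn : 0 ≤ ∑ i : Fin n, a i * y i :=
    Finset.sum_nonneg fun i _ => mul_nonneg (ha' i) (hy0 i)
  have hRnn : 0 ≤ R := by
    rw [hRdef]
    exact Finset.sum_nonneg fun j _ => mul_nonneg (ha' j)
      (by simp only [Pi.add_apply]; linarith [hx0 j, hy0 j])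
  -- Claim C : η * (R + b) ≤ Pv i + b
  have hC : ∀ i : Fin n, η * (R + b) ≤ (A + a i * y i) + b := by
    intro i
    have hc : 0 ≤ a i * (x i + y i) := mul_nonneg (ha' i) (by linarith [hx0 i, hy0 i])
    have hRle : R + b ≤ b + a i * (x i + y i) + S i := by
      have hsplit : a i * ((x + y) i) + ∑ j ∈ Finset.univ.erase i, a j * (x + y) j = R := by
        rw [hRdef]; exact Finset.add_sum_erase Finset.univ (fun j => a j * (x + y) j) (Finset.mem_univ i)
      have hle : ∑ j ∈ Finset.univ.erase i, a j * (x + y) j ≤ S i := by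
        apply Finset.sum_le_sum
        intro j _
        exact mul_le_mul_of_nonneg_left (by simpa using hxyu j) (ha' j)
      simp only [Pi.add_apply] at hsplit hle
      linarith
    have hPge : b + a i * (x i + y i) ≤ (A + a i * y i) + b := by
      have : a i * x i ≤ A := by
        rw [hAdef]
        exact Finset.single_le_sum (f := fun j => a j * x j)
          (fun j _ => mul_nonneg (ha' j) (hx0 j)) (Finset.mem_univ i)
      nlinarith
    have hfrac : η * (b + a i * (x i + y i) + S i) ≤ b + a i * (x i + y i) := by
      have h1 : η * (b + a i * (x i + y i) + S i) ≤
          b / (b + S i) * (b + a i * (x i + y i) + S i) := by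
        apply mul_le_mul_of_nonneg_right (hηle i)
        linarith [hS i]
      have h2 : b / (b + S i) * (b + a i * (x i + y i) + S i) ≤ b + a i * (x i + y i) := by
        rw [div_mul_eq_mul_div, div_le_iff₀ (hbS i)]
        nlinarith [hS i]
      linarith
    have := mul_le_mul_of_nonneg_left hRle hηpos.le
    linarith
  -- assemble
  have hLHS : ∑ i : Fin n,
      (f (x + Pi.single i (y i)) * ((∑ j : Fin n, a j * ((x + Pi.single i (y i) : Fin n → ℝ)) j) + b)
        - f x * ((∑ j : Fin n, a j * x j) + b)) =
      (∑ i : Fin n, Δ i * ((A + a i * y i) + b)) + f x * ∑ i : Fin n, a i * y i := by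
    rw [Finset.mul_sum, ← Finset.sum_add_distrib]
    apply Finset.sum_congr rfl
    intro i _
    rw [hPv i]
    simp only [hΔdef, ← hAdef]
    ring
  have hfx : 0 ≤ f x := hnn x hx
  rw [hLHS]
  have hstep1 : η * ((f (x + y) - f x) * (R + b)) ≤
      ∑ i : Fin n, Δ i * ((A + a i * y i) + b) := by
    have e1 : η * ((f (x + y) - f x) * (R + b)) ≤ η * ((∑ i : Fin n, Δ i) * (R + b)) := by
      apply mul_le_mul_of_nonneg_left _ hηpos.le
      apply mul_le_mul_of_nonneg_right Qn
      linarith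
    have e2 : η * ((∑ i : Fin n, Δ i) * (R + b)) = ∑ i : Fin n, Δ i * (η * (R + b)) := by
      rw [Finset.sum_mul, Finset.mul_sum]
      exact Finset.sum_congr rfl fun i _ => by ring
    have e3 : ∑ i : Fin n, Δ i * (η * (R + b)) ≤ ∑ i : Fin n, Δ i * ((A + a i * y i) + b) :=
      Finset.sum_le_sum fun i _ => mul_le_mul_of_nonneg_left (hC i) (hΔ0 i)
    linarith
  have hstep2 : η * (f x * ∑ i : Fin n, a i * y i) ≤ f x * ∑ i : Fin n, a i * y i := by
    nlinarith [mul_nonneg hfx hDnn]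
  have hrw : f (x + y) * (R + b) - f x * (A + b) =
      (f (x + y) - f x) * (R + b) + f x * ∑ i : Fin n, a i * y i := by
    rw [hRA]; ring
  rw [hrw, mul_add]
  linarith
end

section
/- (Non-submodular sensor coverage, bounded total payoff.) Let N, d ∈ ℕ, p_i^r ∈ [0, 1) for i ∈ [N], r ∈ [d], and for r ∈ [d] let a_r ≥ 0 and b_r > 0. For x ∈ ℝ^{Nd}_+ in blocks (x_1, …, x_N) with x_i ∈ ℝ^d_+, define P(r, x) = 1 − ∏_{i=1}^N (1 − p_i^r)^{[x_i]_r}, the affine weight w_r(x) = a_r (∑_{i=1}^N [x_i]_r)/N + b_r, and the social function γ(x) = ∑_{r=1}^d w_r(x) · P(r, x). Then for every x ∈ ℝ^{Nd}_+, ∑_{i=1}^N [γ(x) − γ(0, x_{-i})] ≤ 2 γ(x), where (0, x_{-i}) denotes x with block i replaced by the zero vector. -/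
open Finset

/-- Telescoping bound: `∑ᵢ (∏_{j≠i} qⱼ)(1-qᵢ) ≤ 1 - ∏ⱼ qⱼ` for `qⱼ ∈ [0,1]`. -/
lemma telescope_aux {ι : Type*} [DecidableEq ι] (s : Finset ι) (q : ι → ℝ)
    (hq0 : ∀ i ∈ s, 0 ≤ q i) (hq1 : ∀ i ∈ s, q i ≤ 1) :
    ∑ i ∈ s, (∏ j ∈ s.erase i, q j) * (1 - q i) ≤ 1 - ∏ i ∈ s, q i := by
  induction s using Finset.induction_on with
  | empty => simp
  | @insert a s hanot ih =>
    have ha0 : 0 ≤ q a := hq0 a (mem_insert_self a s)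
    have ha1 : q a ≤ 1 := hq1 a (mem_insert_self a s)
    have hs0 : ∀ i ∈ s, 0 ≤ q i := fun i hi => hq0 i (mem_insert_of_mem hi)
    have hs1 : ∀ i ∈ s, q i ≤ 1 := fun i hi => hq1 i (mem_insert_of_mem hi)
    have hPs : 0 ≤ ∏ j ∈ s, q j := Finset.prod_nonneg hs0
    rw [Finset.sum_insert hanot, Finset.prod_insert hanot, Finset.erase_insert hanot]
    have hkey : ∑ i ∈ s, (∏ j ∈ (insert a s).erase i, q j) * (1 - q i)
        ≤ ∑ i ∈ s, (∏ j ∈ s.erase i, q j) * (1 - q i) := by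
      apply Finset.sum_le_sum
      intro i hi
      have hne : a ≠ i := by rintro rfl; exact hanot hi
      rw [Finset.erase_insert_of_ne hne,
        Finset.prod_insert (fun h => hanot (Finset.mem_of_mem_erase h))]
      have h1 : 0 ≤ ∏ j ∈ s.erase i, q j :=
        Finset.prod_nonneg fun j hj => hs0 j (Finset.mem_of_mem_erase hj)
      have h2 : 0 ≤ 1 - q i := by linarith [hs1 i hi]
      nlinarith [mul_nonneg (mul_nonneg (sub_nonneg.mpr ha1) h1) h2]
    have := ih hs0 hs1
    nlinarith
  

lemma ite_sum_erase {N : ℕ} (i : Fin N) (f : Fin N → ℝ) :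
    ∑ j : Fin N, (if j = i then 0 else f j) = (∑ j : Fin N, f j) - f i := by
  have h1 := Finset.sum_erase_add Finset.univ
    (fun j => if j = i then (0:ℝ) else f j) (Finset.mem_univ i)
  have h2 := Finset.sum_erase_add Finset.univ f (Finset.mem_univ i)
  have h3 : ∑ j ∈ Finset.univ.erase i, (if j = i then (0:ℝ) else f j)
      = ∑ j ∈ Finset.univ.erase i, f j :=
    Finset.sum_congr rfl fun j hj => if_neg (Finset.ne_of_mem_erase hj)
  rw [← h1, h3]
  simp only [if_pos rfl, if_true]
  linarith [h2]

lemma ite_prod_erase {N : ℕ} (i : Fin N) (f : Fin N → ℝ) :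
    ∏ j : Fin N, (if j = i then 1 else f j) = ∏ j ∈ Finset.univ.erase i, f j := by
  have h1 := Finset.prod_erase_mul Finset.univ
    (fun j => if j = i then (1:ℝ) else f j) (Finset.mem_univ i)
  have h3 : ∏ j ∈ Finset.univ.erase i, (if j = i then (1:ℝ) else f j)
      = ∏ j ∈ Finset.univ.erase i, f j :=
    Finset.prod_congr rfl fun j hj => if_neg (Finset.ne_of_mem_erase hj)
  rw [← h1, h3]
  simp only [if_pos rfl, if_true]
  ring

/-- Per-resource inequality. -/
lemma per_r {N : ℕ} (q t : Fin N → ℝ)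
    (hq0 : ∀ i, 0 ≤ q i) (hq1 : ∀ i, q i ≤ 1) (ht : ∀ i, 0 ≤ t i)
    (a b : ℝ) (ha : 0 ≤ a) (hb : 0 ≤ b) (n : ℝ) (hn : 0 ≤ n) :
    ∑ i : Fin N, ((a * (∑ j, t j) / n + b) * (1 - ∏ j, q j)
      - (a * ((∑ j, t j) - t i) / n + b) * (1 - ∏ j ∈ Finset.univ.erase i, q j))
      ≤ 2 * ((a * (∑ j, t j) / n + b) * (1 - ∏ j, q j)) := by
  set S := ∑ j, t j with hSdef
  set Q := ∏ j, q j with hQdef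
  have hS : 0 ≤ S := Finset.sum_nonneg fun j _ => ht j
  have hQ0 : 0 ≤ Q := Finset.prod_nonneg fun j _ => hq0 j
  have hQ1 : Q ≤ 1 := Finset.prod_le_one (fun j _ => hq0 j) (fun j _ => hq1 j)
  have hw : 0 ≤ a * S / n + b := add_nonneg (div_nonneg (mul_nonneg ha hS) hn) hb
  have haSn : 0 ≤ a * S / n := div_nonneg (mul_nonneg ha hS) hn
  have hstep : ∀ i : Fin N,
      (a * S / n + b) * (1 - Q) - (a * (S - t i) / n + b) * (1 - ∏ j ∈ Finset.univ.erase i, q j)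
      ≤ (a * S / n + b) * ((∏ j ∈ Finset.univ.erase i, q j) * (1 - q i))
        + (a * t i / n) * (1 - Q) := by
    intro i
    set Qi := ∏ j ∈ Finset.univ.erase i, q j with hQidef
    have hQi0 : 0 ≤ Qi := Finset.prod_nonneg fun j _ => hq0 j
    have hQeq : Q = q i * Qi := (Finset.mul_prod_erase Finset.univ q (Finset.mem_univ i)).symm
    have hu : 0 ≤ a * t i / n := div_nonneg (mul_nonneg ha (ht i)) hn
    have hv : a * (S - t i) / n = a * S / n - a * t i / n := by ring
    rw [hQeq, hv]
    nlinarith [mul_nonneg (mul_nonneg hu hQi0) (sub_nonneg.mpr (hq1 i))]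
  calc ∑ i : Fin N, ((a * S / n + b) * (1 - Q)
        - (a * (S - t i) / n + b) * (1 - ∏ j ∈ Finset.univ.erase i, q j))
      ≤ ∑ i : Fin N, ((a * S / n + b) * ((∏ j ∈ Finset.univ.erase i, q j) * (1 - q i))
        + (a * t i / n) * (1 - Q)) := Finset.sum_le_sum fun i _ => hstep i
    _ = (a * S / n + b) * (∑ i : Fin N, (∏ j ∈ Finset.univ.erase i, q j) * (1 - q i))
        + (a * S / n) * (1 - Q) := by
        rw [Finset.sum_add_distrib, ← Finset.mul_sum, ← Finset.sum_mul]
        congr 1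
        congr 1
        rw [hSdef, Finset.mul_sum, Finset.sum_div]
    _ ≤ (a * S / n + b) * (1 - Q) + (a * S / n) * (1 - Q) := by
        have := telescope_aux Finset.univ q (fun i _ => hq0 i) (fun i _ => hq1 i)
        have h := mul_le_mul_of_nonneg_left this hw
        linarith
    _ ≤ 2 * ((a * S / n + b) * (1 - Q)) := by nlinarith

/-- Replace player `i`'s block of the joint strategy `x` by `v`, i.e. the outcome
`(v, x₋ᵢ)`. -/
def upd {N d : ℕ} (x : Fin N × Fin d → ℝ) (i : Fin N) (v : Fin d → ℝ) :
    Fin N × Fin d → ℝ :=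
  fun q => if q.1 = i then v q.2 else x q

/-- Non-submodular sensor coverage, bounded total payoff: for the social function
`γ(x) = ∑ᵣ wᵣ(x) · P(r, x)` with affine weights `wᵣ(x) = aᵣ (∑ᵢ [xᵢ]ᵣ)/N + bᵣ` and
`P(r, x) = 1 − ∏ᵢ (1 − pᵢʳ)^{[xᵢ]ᵣ}`, the sum of the marginal contributions over the players
is at most `2 γ(x)`. -/
theorem nonsubmodular_sensor_coverage_sum_payoff_le {N d : ℕ} (hN : 0 < N)
    (p : Fin N → Fin d → ℝ)
    (hp0 : ∀ i r, 0 ≤ p i r) (hp1 : ∀ i r, p i r < 1)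
    (a : Fin d → ℝ) (ha : ∀ r, 0 ≤ a r)
    (b : Fin d → ℝ) (hb : ∀ r, 0 < b r)
    (γ : (Fin N × Fin d → ℝ) → ℝ)
    (hγ : ∀ x, γ x = ∑ r : Fin d,
      (a r * (∑ i : Fin N, x (i, r)) / N + b r) *
        (1 - ∏ i : Fin N, (1 - p i r) ^ x (i, r))) :
    ∀ x : Fin N × Fin d → ℝ, 0 ≤ x →
      ∑ i : Fin N, (γ x - γ (upd x i 0)) ≤ 2 * γ x := by
  intro x hx
  have hx' : ∀ q, 0 ≤ x q := fun q => hx q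
  simp only [hγ, ← Finset.sum_sub_distrib]
  rw [Finset.sum_comm, Finset.mul_sum]
  refine Finset.sum_le_sum fun r _ => ?_
  have hc0 : ∀ j : Fin N, (0:ℝ) ≤ 1 - p j r := fun j => by linarith [hp1 j r]
  have hq0 : ∀ j : Fin N, 0 ≤ (1 - p j r) ^ x (j, r) :=
    fun j => Real.rpow_nonneg (hc0 j) _
  have hq1 : ∀ j : Fin N, (1 - p j r) ^ x (j, r) ≤ 1 :=
    fun j => Real.rpow_le_one (hc0 j) (by linarith [hp0 j r]) (hx' (j, r))
  have h1 : ∀ i : Fin N, ∑ j : Fin N, upd x i 0 (j, r)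
      = (∑ j : Fin N, x (j, r)) - x (i, r) := by
    intro i
    rw [show (fun j : Fin N => upd x i 0 (j, r))
        = fun j : Fin N => if j = i then 0 else x (j, r) from funext fun j => by
          by_cases h : j = i <;> simp [upd, h]]
    exact ite_sum_erase i _
  have h2 : ∀ i : Fin N, ∏ j : Fin N, (1 - p j r) ^ upd x i 0 (j, r)
      = ∏ j ∈ Finset.univ.erase i, (1 - p j r) ^ x (j, r) := by
    intro i
    calc ∏ j : Fin N, (1 - p j r) ^ upd x i 0 (j, r)
        = ∏ j : Fin N, (if j = i then 1 else (1 - p j r) ^ x (j, r)) := by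
          refine Finset.prod_congr rfl fun j _ => ?_
          by_cases h : j = i <;> simp [upd, h]
      _ = _ := ite_prod_erase i _
  have hrw : ∀ i : Fin N, ((a r * ∑ j : Fin N, upd x i 0 (j, r)) / ↑N + b r) *
      (1 - ∏ j : Fin N, (1 - p j r) ^ upd x i 0 (j, r))
      = (a r * ((∑ j : Fin N, x (j, r)) - x (i, r)) / ↑N + b r) *
      (1 - ∏ j ∈ Finset.univ.erase i, (1 - p j r) ^ x (j, r)) :=
    fun i => by rw [h1 i, h2 i]
  simp only [hrw]
  exact per_r (fun j => (1 - p j r) ^ x (j, r)) (fun j => x (j, r)) hq0 hq1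
    (fun j => hx' (j, r)) (a r) (b r) (ha r) (hb r).le (N : ℝ) (Nat.cast_nonneg N)
end
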